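/- Let x ∈ {0,1}^n, x not the all-ones string, whose critical block contains exactly k − 1 ones. Then among all Hamming-distance-1 neighbours y of x with DLB_k(y) > DLB_k(x), the unique neighbour of maximal DLB_k-value is the one obtained by flipping the unique zero of the critical block to one; this neighbour has at least c(x) leading all-ones blocks and DLB_k-value at least c(x)·k. Consequently, the first step of best-improvement local search on DLB_k from such an x flips the unique zero of the critical block, regardless of tie-breaking. -/

import Mathlib

open Finset
open scoped ENNReal

noncomputable section

/-- Bit strings of length `n`. -/
abbrev BitStr (n : ℕ) := Fin n → Bool

/-- The all-ones string. -/
def allOnes (n : ℕ) : BitStr n := fun _ => true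

/-- The number of ones in the `ℓ`-th block (`0`-indexed), i.e. among the
(`0`-indexed) positions `ℓ*k, …, ℓ*k + k - 1`. -/
def blockOnes (k n : ℕ) (x : BitStr n) (ℓ : ℕ) : ℕ :=
  (Finset.univ.filter fun i : Fin n => ℓ * k ≤ i.1 ∧ i.1 < ℓ * k + k ∧ x i = true).card

/-- The number of leading all-ones blocks of `x` (at most `n / k`).  For
`x ≠ allOnes n` (and `k ∣ n`) this is `c(x) - 1`, the (`0`-indexed) index of the
critical block. -/
def leadBlocks (k n : ℕ) (x : BitStr n) : ℕ :=
  Nat.findGreatest (fun j => ∀ ℓ < j, blockOnes k n x ℓ = k) (n / k)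

/-- The DeceptiveLeadingBlocks function with block length `k`:
`DLB_k(x) = k (c(x) - 1) + (k - 1 - ‖x_{B_{c(x)}}‖₁)` for `x` not the all-ones
string, and `DLB_k` of the all-ones string is `n`. -/
def dlb (k n : ℕ) (x : BitStr n) : ℕ :=
  if x = allOnes n then n
  else k * leadBlocks k n x + (k - 1 - blockOnes k n x (leadBlocks k n x))

def blockSet (k n ℓ : ℕ) : Finset (Fin n) :=
  Finset.univ.filter fun i => ℓ * k ≤ i.1 ∧ i.1 < ℓ * k + k

lemma mem_blockSet {k n ℓ : ℕ} {i : Fin n} :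
    i ∈ blockSet k n ℓ ↔ ℓ * k ≤ i.1 ∧ i.1 < ℓ * k + k := by
  simp [blockSet]

lemma blockOnes_def (k n : ℕ) (x : BitStr n) (ℓ : ℕ) :
    blockOnes k n x ℓ = ((blockSet k n ℓ).filter fun i => x i = true).card := by
  unfold blockOnes blockSet
  rw [Finset.filter_filter]
  congr 1
  ext i
  simp [and_assoc]

lemma card_blockSet {k n : ℕ} (ℓ : ℕ) (h : ℓ * k + k ≤ n) :
    (blockSet k n ℓ).card = k := by
  have hmap : blockSet k n ℓ = Finset.univ.map
      ⟨fun j : Fin k => (⟨ℓ * k + j.1, by have := j.2; omega⟩ : Fin n),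
       fun a b hab => by
         have : ℓ * k + a.1 = ℓ * k + b.1 := congrArg Fin.val hab
         exact Fin.ext (by omega)⟩ := by
    ext i
    simp only [mem_blockSet, Finset.mem_map, Finset.mem_univ, true_and,
      Function.Embedding.coeFn_mk]
    constructor
    · rintro ⟨h1, h2⟩
      exact ⟨⟨i.1 - ℓ * k, by omega⟩, Fin.ext (by show ℓ * k + (i.1 - ℓ * k) = i.1; omega)⟩
    · rintro ⟨j, rfl⟩
      have := j.2
      show ℓ * k ≤ ℓ * k + j.1 ∧ ℓ * k + j.1 < ℓ * k + k; omega
  rw [hmap, Finset.card_map, Finset.card_univ, Fintype.card_fin]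

lemma all_true_of_full {k n : ℕ} (x : BitStr n) (ℓ : ℕ) (h : ℓ * k + k ≤ n)
    (hf : blockOnes k n x ℓ = k) {i : Fin n} (h1 : ℓ * k ≤ i.1) (h2 : i.1 < ℓ * k + k) :
    x i = true := by
  have hc : (blockSet k n ℓ).card = k := card_blockSet ℓ h
  have heq : (blockSet k n ℓ).filter (fun i => x i = true) = blockSet k n ℓ := by
    apply Finset.eq_of_subset_of_card_le (Finset.filter_subset _ _)
    rw [hc, ← blockOnes_def, hf]
  have hi : i ∈ blockSet k n ℓ := mem_blockSet.2 ⟨h1, h2⟩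
  rw [← heq] at hi
  exact (Finset.mem_filter.1 hi).2

lemma filter_eq_erase {k n : ℕ} (x : BitStr n) (ℓ : ℕ) (h : ℓ * k + k ≤ n)
    (hf : blockOnes k n x ℓ = k - 1) {i₀ : Fin n}
    (h1 : ℓ * k ≤ i₀.1) (h2 : i₀.1 < ℓ * k + k) (hz : x i₀ = false) :
    (blockSet k n ℓ).filter (fun i => x i = true) = (blockSet k n ℓ).erase i₀ := by
  have hc : (blockSet k n ℓ).card = k := card_blockSet ℓ h
  have hi₀ : i₀ ∈ blockSet k n ℓ := mem_blockSet.2 ⟨h1, h2⟩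
  apply Finset.eq_of_subset_of_card_le
  · intro j hj
    rw [Finset.mem_filter] at hj
    rw [Finset.mem_erase]
    refine ⟨?_, hj.1⟩
    rintro rfl
    rw [hz] at hj
    exact absurd hj.2 (by simp)
  · rw [Finset.card_erase_of_mem hi₀, hc, ← blockOnes_def, hf]

lemma blk_unique_zero {k n : ℕ} (x : BitStr n) (ℓ : ℕ) (h : ℓ * k + k ≤ n)
    (hf : blockOnes k n x ℓ = k - 1) {i₀ : Fin n}
    (h1 : ℓ * k ≤ i₀.1) (h2 : i₀.1 < ℓ * k + k) (hz : x i₀ = false)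
    {i : Fin n} (hi1 : ℓ * k ≤ i.1) (hi2 : i.1 < ℓ * k + k) (hne : i ≠ i₀) :
    x i = true := by
  have heq := filter_eq_erase x ℓ h hf h1 h2 hz
  have hi : i ∈ (blockSet k n ℓ).erase i₀ :=
    Finset.mem_erase.2 ⟨hne, mem_blockSet.2 ⟨hi1, hi2⟩⟩
  rw [← heq] at hi
  exact (Finset.mem_filter.1 hi).2

lemma blockOnes_update_of_not_mem {k n : ℕ} (x : BitStr n) (i : Fin n) (b : Bool)
    (ℓ : ℕ) (h : ¬(ℓ * k ≤ i.1 ∧ i.1 < ℓ * k + k)) :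
    blockOnes k n (Function.update x i b) ℓ = blockOnes k n x ℓ := by
  rw [blockOnes_def, blockOnes_def]
  congr 1
  apply Finset.filter_congr
  intro j hj
  have hne : j ≠ i := by
    rintro rfl
    exact h (mem_blockSet.1 hj)
  rw [Function.update_of_ne hne]

lemma leadBlocks_le (k n : ℕ) (x : BitStr n) : leadBlocks k n x ≤ n / k :=
  Nat.findGreatest_le _

lemma blockOnes_of_lt_lead {k n : ℕ} (x : BitStr n) {ℓ : ℕ}
    (h : ℓ < leadBlocks k n x) : blockOnes k n x ℓ = k := by
  have h0 : ∀ ℓ' < leadBlocks k n x, blockOnes k n x ℓ' = k :=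
    Nat.findGreatest_spec (P := fun j => ∀ ℓ' < j, blockOnes k n x ℓ' = k)
      (Nat.zero_le _) (by intro ℓ' hℓ'; omega)
  exact h0 ℓ h

lemma leadBlocks_eq {k n : ℕ} (x : BitStr n) (c : ℕ) (hle : c ≤ n / k)
    (hfull : ∀ ℓ < c, blockOnes k n x ℓ = k) (hc : blockOnes k n x c ≠ k) :
    leadBlocks k n x = c := by
  have h1 : c ≤ leadBlocks k n x := Nat.le_findGreatest hle hfull
  have h2 : leadBlocks k n x ≤ c := by
    by_contra h
    push_neg at h
    exact hc (blockOnes_of_lt_lead x h)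
  omega

lemma leadBlocks_lt {k n : ℕ} (hk : 1 ≤ k) (hdvd : k ∣ n) (x : BitStr n)
    (hx : x ≠ allOnes n) : leadBlocks k n x < n / k := by
  rcases Nat.lt_or_ge (leadBlocks k n x) (n / k) with h | h
  · exact h
  exfalso
  have heq : leadBlocks k n x = n / k := le_antisymm (leadBlocks_le k n x) h
  apply hx
  funext i
  have hin : i.1 < n := i.2
  have hnk : n / k * k = n := Nat.div_mul_cancel hdvd
  set ℓ := i.1 / k with hℓ
  have hl1 : ℓ * k ≤ i.1 := Nat.div_mul_le_self _ _
  have hdm : ℓ * k + i.1 % k = i.1 := by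
    rw [hℓ, mul_comm]; exact Nat.div_add_mod i.1 k
  have hmlt : i.1 % k < k := Nat.mod_lt i.1 (by omega : 0 < k)
  have hl2 : i.1 < ℓ * k + k := by omega
  have hℓlt : ℓ < n / k := by
    by_contra hcon
    push_neg at hcon
    have : n / k * k ≤ ℓ * k := Nat.mul_le_mul_right _ hcon
    omega
  have hfull : blockOnes k n x ℓ = k := blockOnes_of_lt_lead x (by omega)
  have hbnd : ℓ * k + k ≤ n := by
    have h3 : (ℓ + 1) * k ≤ n / k * k := Nat.mul_le_mul_right _ (by omega)
    have h4 : (ℓ + 1) * k = ℓ * k + k := by ring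
    omega
  exact all_true_of_full x ℓ hbnd hfull hl1 hl2

/-- If the critical block of `x` contains exactly `k - 1` ones and `i₀` is its
unique zero position, then flipping `i₀` to one gives the unique Hamming-distance-1
neighbour of maximal `DLB_k`-value: it is strictly better than `x` and strictly
better than every other neighbour, it has at least `c(x)` leading all-ones blocks,
and its `DLB_k`-value is at least `c(x) · k`.  Consequently the first step of
best-improvement local search from `x` flips this zero, regardless of
tie-breaking. -/
theorem dlb_unique_best_neighbour (k n : ℕ) (hk : 2 ≤ k) (hn : 0 < n)
    (hdvd : k ∣ n) (x : BitStr n) (hx : x ≠ allOnes n)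
    (hones : blockOnes k n x (leadBlocks k n x) = k - 1)
    (i₀ : Fin n) (hi1 : leadBlocks k n x * k ≤ i₀.1)
    (hi2 : i₀.1 < leadBlocks k n x * k + k) (hzero : x i₀ = false) :
    dlb k n x < dlb k n (Function.update x i₀ true) ∧
    (∀ i : Fin n, i ≠ i₀ →
      dlb k n (Function.update x i (!x i)) < dlb k n (Function.update x i₀ true)) ∧
    (∀ i : Fin n, i.1 < (leadBlocks k n x + 1) * k → Function.update x i₀ true i = true) ∧
    (leadBlocks k n x + 1) * k ≤ dlb k n (Function.update x i₀ true) := by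
  set c := leadBlocks k n x with hc
  set y := Function.update x i₀ true with hy
  have hk0 : 0 < k := by omega
  have hcn : c < n / k := leadBlocks_lt (by omega) hdvd x hx
  have hnk : n / k * k = n := Nat.div_mul_cancel hdvd
  have hbnd' : ∀ ℓ, ℓ ≤ c → ℓ * k + k ≤ n := by
    intro ℓ hℓ
    have h3 : (ℓ + 1) * k ≤ n / k * k := Nat.mul_le_mul_right _ (by omega)
    have h4 : (ℓ + 1) * k = ℓ * k + k := by ring
    omega
  have hfull : ∀ ℓ < c, blockOnes k n x ℓ = k := fun ℓ hℓ => blockOnes_of_lt_lead x hℓ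
  -- positions in full blocks are true
  have htrue : ∀ i : Fin n, i.1 < c * k → x i = true := by
    intro i hi
    set ℓ := i.1 / k with hℓ
    have hl1 : ℓ * k ≤ i.1 := Nat.div_mul_le_self _ _
    have hdm : ℓ * k + i.1 % k = i.1 := by
      rw [hℓ, mul_comm]; exact Nat.div_add_mod i.1 k
    have hmlt : i.1 % k < k := Nat.mod_lt i.1 hk0
    have hl2 : i.1 < ℓ * k + k := by omega
    have hℓc : ℓ < c := by
      by_contra hcon
      push_neg at hcon
      have : c * k ≤ ℓ * k := Nat.mul_le_mul_right _ hcon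
      omega
    exact all_true_of_full x ℓ (hbnd' ℓ (by omega)) (hfull ℓ hℓc) hl1 hl2
  have hbndc : c * k + k ≤ n := hbnd' c le_rfl
  have huniq : ∀ i : Fin n, c * k ≤ i.1 → i.1 < c * k + k → i ≠ i₀ → x i = true :=
    fun i h1 h2 h3 => blk_unique_zero x c hbndc hones hi1 hi2 hzero h1 h2 h3
  -- helper: i₀ or other indices not in low blocks
  have hnotin : ∀ (j : Fin n) (ℓ : ℕ), ℓ * k + k ≤ j.1 ∨ j.1 < ℓ * k →
      ¬(ℓ * k ≤ j.1 ∧ j.1 < ℓ * k + k) := by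
    intro j ℓ h; omega
  have hmul : ∀ a b : ℕ, a < b → a * k + k ≤ b * k := by
    intro a b h
    have h3 : (a + 1) * k ≤ b * k := Nat.mul_le_mul_right _ (by omega)
    have h4 : (a + 1) * k = a * k + k := by ring
    omega
  -- blocks of y
  have hyℓ : ∀ ℓ < c, blockOnes k n y ℓ = k := by
    intro ℓ hℓ
    rw [hy, blockOnes_update_of_not_mem x i₀ true ℓ
      (hnotin i₀ ℓ (Or.inl (le_trans (hmul ℓ c hℓ) hi1)))]
    exact hfull ℓ hℓ
  have hyc : blockOnes k n y c = k := by
    rw [blockOnes_def, Finset.filter_true_of_mem, card_blockSet c hbndc]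
    intro j hj
    rcases mem_blockSet.1 hj with ⟨hj1, hj2⟩
    by_cases hji : j = i₀
    · subst hji; simp [hy]
    · rw [hy, Function.update_of_ne hji]
      exact huniq j hj1 hj2 hji
  have hylead : c + 1 ≤ leadBlocks k n y := by
    apply Nat.le_findGreatest (by omega)
    intro ℓ hℓ
    rcases Nat.lt_or_ge ℓ c with h | h
    · exact hyℓ ℓ h
    · have : ℓ = c := by omega
      rw [this]; exact hyc
  have hydlb : (c + 1) * k ≤ dlb k n y := by
    rw [dlb]
    split_ifs with h
    · have e : (c + 1) * k = c * k + k := by ring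
      omega
    · have h1 : k * (c + 1) ≤ k * leadBlocks k n y := Nat.mul_le_mul_left _ hylead
      have e : (c + 1) * k = k * (c + 1) := by ring
      omega
  have hdx : dlb k n x = k * c := by
    rw [dlb, if_neg hx, ← hc, hones]
    omega
  refine ⟨?_, ?_, ?_, hydlb⟩
  · rw [hdx]
    have e : (c + 1) * k = k * c + k := by ring
    omega
  · -- unique best neighbour
    intro i hne
    set z := Function.update x i (!x i) with hz
    have hzi₀ : z i₀ = false := by
      rw [hz, Function.update_of_ne (Ne.symm hne)]; exact hzero
    have hzx : z ≠ allOnes n := by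
      intro h
      rw [h] at hzi₀
      exact absurd hzi₀ (by simp [allOnes])
    have hin : i.1 < n := i.2
    rcases (by omega : i.1 < c * k ∨ (c * k ≤ i.1 ∧ i.1 < c * k + k) ∨ c * k + k ≤ i.1)
      with hpos | hpos | hpos
    · -- case A: i in a full block ℓ < c
      set ℓ := i.1 / k with hℓ
      have hl1 : ℓ * k ≤ i.1 := Nat.div_mul_le_self _ _
      have hdm : ℓ * k + i.1 % k = i.1 := by
        rw [hℓ, mul_comm]; exact Nat.div_add_mod i.1 k
      have hmlt : i.1 % k < k := Nat.mod_lt i.1 hk0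
      have hl2 : i.1 < ℓ * k + k := by omega
      have hℓc : ℓ < c := by
        by_contra hcon
        push_neg at hcon
        have : c * k ≤ ℓ * k := Nat.mul_le_mul_right _ hcon
        omega
      have hxi : x i = true := htrue i hpos
      have hzfull : ∀ ℓ' < ℓ, blockOnes k n z ℓ' = k := by
        intro ℓ' hℓ'
        rw [hz, blockOnes_update_of_not_mem x i _ ℓ'
          (hnotin i ℓ' (Or.inl (le_trans (hmul ℓ' ℓ hℓ') hl1)))]
        exact hfull ℓ' (by omega)
      have hzℓ : blockOnes k n z ℓ = k - 1 := by
        rw [blockOnes_def]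
        have heq : (blockSet k n ℓ).filter (fun j => z j = true) =
            (blockSet k n ℓ).erase i := by
          ext j
          rw [Finset.mem_filter, Finset.mem_erase]
          constructor
          · rintro ⟨hj, hzj⟩
            refine ⟨?_, hj⟩
            rintro rfl
            rw [hz, Function.update_self, hxi] at hzj
            exact absurd hzj (by simp)
          · rintro ⟨hne', hj⟩
            refine ⟨hj, ?_⟩
            rw [hz, Function.update_of_ne hne']
            rcases mem_blockSet.1 hj with ⟨hj1, hj2⟩
            exact all_true_of_full x ℓ (hbnd' ℓ (by omega)) (hfull ℓ hℓc) hj1 hj2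
        rw [heq, Finset.card_erase_of_mem (mem_blockSet.2 ⟨hl1, hl2⟩),
          card_blockSet ℓ (hbnd' ℓ (by omega))]
      have hzlead : leadBlocks k n z = ℓ :=
        leadBlocks_eq z ℓ (by omega) hzfull (by omega)
      have hdz : dlb k n z = k * ℓ := by
        rw [dlb, if_neg hzx, hzlead, hzℓ]
        omega
      rw [hdz]
      have e1 : k * (ℓ + 1) ≤ k * (c + 1) := Nat.mul_le_mul_left _ (by omega)
      have e2 : k * (ℓ + 1) = k * ℓ + k := by ring
      have e3 : (c + 1) * k = k * (c + 1) := by ring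
      omega
    · -- case B: i in critical block, i ≠ i₀
      have hxi : x i = true := huniq i hpos.1 hpos.2 hne
      have hzfull : ∀ ℓ' < c, blockOnes k n z ℓ' = k := by
        intro ℓ' hℓ'
        rw [hz, blockOnes_update_of_not_mem x i _ ℓ'
          (hnotin i ℓ' (Or.inl (le_trans (hmul ℓ' c hℓ') hpos.1)))]
        exact hfull ℓ' hℓ'
      have hzc : blockOnes k n z c = k - 2 := by
        rw [blockOnes_def]
        have heq : (blockSet k n c).filter (fun j => z j = true) =
            ((blockSet k n c).erase i₀).erase i := by
          ext j
          rw [Finset.mem_filter, Finset.mem_erase, Finset.mem_erase]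
          constructor
          · rintro ⟨hj, hzj⟩
            have hji : j ≠ i := by
              rintro rfl
              rw [hz, Function.update_self, hxi] at hzj
              exact absurd hzj (by simp)
            refine ⟨hji, ?_, hj⟩
            rintro rfl
            rw [hz, Function.update_of_ne hji, hzero] at hzj
            exact absurd hzj (by simp)
          · rintro ⟨hji, hji₀, hj⟩
            refine ⟨hj, ?_⟩
            rw [hz, Function.update_of_ne hji]
            rcases mem_blockSet.1 hj with ⟨hj1, hj2⟩
            exact huniq j hj1 hj2 hji₀
        rw [heq, Finset.card_erase_of_mem
          (Finset.mem_erase.2 ⟨hne, mem_blockSet.2 ⟨hpos.1, hpos.2⟩⟩),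
          Finset.card_erase_of_mem (mem_blockSet.2 ⟨hi1, hi2⟩), card_blockSet c hbndc]
        omega
      have hzlead : leadBlocks k n z = c :=
        leadBlocks_eq z c (by omega) hzfull (by omega)
      have hdz : dlb k n z = k * c + 1 := by
        rw [dlb, if_neg hzx, hzlead, hzc]
        omega
      rw [hdz]
      have e : (c + 1) * k = k * c + k := by ring
      omega
    · -- case C: i beyond the critical block
      have hzeq : ∀ ℓ' ≤ c, blockOnes k n z ℓ' = blockOnes k n x ℓ' := by
        intro ℓ' hℓ'
        rw [hz, blockOnes_update_of_not_mem x i _ ℓ'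
          (hnotin i ℓ' (Or.inl ?_))]
        calc ℓ' * k + k ≤ c * k + k := by
              have := Nat.mul_le_mul_right k hℓ'
              omega
          _ ≤ i.1 := hpos
      have hzfull : ∀ ℓ' < c, blockOnes k n z ℓ' = k := by
        intro ℓ' hℓ'
        rw [hzeq ℓ' (by omega)]
        exact hfull ℓ' hℓ'
      have hzc : blockOnes k n z c = k - 1 := by rw [hzeq c le_rfl]; exact hones
      have hzlead : leadBlocks k n z = c :=
        leadBlocks_eq z c (by omega) hzfull (by omega)
      have hdz : dlb k n z = k * c := by
        rw [dlb, if_neg hzx, hzlead, hzc]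
        omega
      rw [hdz]
      have e : (c + 1) * k = k * c + k := by ring
      omega
  · -- leading (c+1) blocks of y are all ones
    intro i hi
    have hck : (c + 1) * k = c * k + k := by ring
    by_cases hii : i = i₀
    · subst hii; simp [hy]
    · rw [hy, Function.update_of_ne hii]
      rcases Nat.lt_or_ge i.1 (c * k) with h | h
      · exact htrue i h
      · exact huniq i h (by omega) hii


end
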